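/- Let X ⊆ ℝ^n and Y ⊆ ℝ^m be nonempty compact convex sets, let f : ℝ^n × ℝ^m → ℝ be continuous and jointly convex in (x,y), and let C : X → Set Y be a concave correspondence with nonempty compact values (i.e., for all λ ∈ (0,1) and x, x' ∈ X, C(λx + (1-λ)x') ⊆ λ C(x) + (1-λ) C(x') in the Minkowski sense). Then the marginal function V(x) = max_{y ∈ C(x)} f(x,y) is convex on X. -/
import Mathlib


open Set Pointwise

abbrev Euc (n : ℕ) := EuclideanSpace ℝ (Fin n)

theorem marginal_convex_of_concave_correspondence {n m : ℕ}
    (X : Set (Euc n)) (Y : Set (Euc m))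
    (hXne : X.Nonempty) (hXcomp : IsCompact X) (hXconv : Convex ℝ X)
    (hYne : Y.Nonempty) (hYcomp : IsCompact Y) (hYconv : Convex ℝ Y)
    (f : Euc n × Euc m → ℝ)
    (hfcont : Continuous f)
    (hfconv : ConvexOn ℝ (X ×ˢ Y) f)
    (C : Euc n → Set (Euc m))
    (hCsub : ∀ x ∈ X, C x ⊆ Y)
    (hCne : ∀ x ∈ X, (C x).Nonempty)
    (hCcomp : ∀ x ∈ X, IsCompact (C x))
    (hCconc : ∀ x ∈ X, ∀ x' ∈ X, ∀ l : ℝ, l ∈ Set.Ioo (0:ℝ) 1 →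
      C (l • x + (1 - l) • x') ⊆ l • C x + (1 - l) • C x') :
    ConvexOn ℝ X (fun x => sSup ((fun y => f (x, y)) '' C x)) := by
  have Vbdd : ∀ x ∈ X, BddAbove ((fun y => f (x, y)) '' C x) := fun x hx =>
    ((hCcomp x hx).image (hfcont.comp (Continuous.prodMk_right x))).bddAbove
  refine ⟨hXconv, ?_⟩
  intro x hx x' hx' a b ha hb hab
  rcases eq_or_lt_of_le ha with ha0 | ha0
  · have hb1 : b = 1 := by linarith
    subst hb1; rw [← ha0]; simp
  rcases eq_or_lt_of_le hb with hb0 | hb0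
  · have ha1 : a = 1 := by linarith
    subst ha1; rw [← hb0]; simp
  have hz : a • x + b • x' ∈ X := hXconv hx hx' ha hb hab
  refine csSup_le ((hCne _ hz).image _) ?_
  rintro r ⟨y, hy, rfl⟩
  have hsub := hCconc x hx x' hx' a ⟨ha0, by linarith⟩
  rw [show (1 - a) = b by linarith] at hsub
  obtain ⟨u, hu, v, hv, huv⟩ := hsub hy
  obtain ⟨y1, hy1, rfl⟩ := hu
  obtain ⟨y2, hy2, rfl⟩ := hv
  subst huv
  have key : f (a • (x, y1) + b • (x', y2)) ≤ a * f (x, y1) + b * f (x', y2) :=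
    hfconv.2 ⟨hx, hCsub x hx hy1⟩ ⟨hx', hCsub x' hx' hy2⟩ ha hb hab
  have hpt : a • ((x, y1) : Euc n × Euc m) + b • (x', y2) = (a • x + b • x', a • y1 + b • y2) := rfl
  rw [hpt] at key
  have h1 : f (x, y1) ≤ sSup ((fun y => f (x, y)) '' C x) :=
    le_csSup (Vbdd x hx) (mem_image_of_mem _ hy1)
  have h2 : f (x', y2) ≤ sSup ((fun y => f (x', y)) '' C x') :=
    le_csSup (Vbdd x' hx') (mem_image_of_mem _ hy2)
  calc (fun y => f (a • x + b • x', y)) (a • y1 + b • y2)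
      = f (a • x + b • x', a • y1 + b • y2) := rfl
    _ ≤ a * f (x, y1) + b * f (x', y2) := key
    _ ≤ a * sSup ((fun y => f (x, y)) '' C x) + b * sSup ((fun y => f (x', y)) '' C x') := by
        gcongr
    _ = a • sSup ((fun y => f (x, y)) '' C x) + b • sSup ((fun y => f (x', y)) '' C x') := rfl
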